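/- arXiv:1607.00709 — 3 statements merged into one kernel-verified Lean document; each statement's English description precedes it below -/
import Mathlib

section
/- For every real t > 1, the Riemann–Siegel theta function satisfies |θ(t) − ((t/2)·log(t/(2πe)) − π/8 + 1/(48t))| ≤ (49/640 + 3ζ(4)/(2π³))·t⁻³. -/
/-!
Three integrations by parts against the periodic Bernoulli functions `Pₖ(x) = Bₖ({x})/k!` turn
Binet's integral at `z = s/2` into `-1/(12z) + 1/(360z³) + 6∫₀^∞ P₄(x)/(x+z)⁴ dx`.
The Fourier expansion of `B₄` gives `|P₄| ≤ 2ζ(4)/(2π)⁴ = 1/720`, and `|x + z|² ≥ x² + (t/2)²`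
bounds the last integral by `(1/720)·π/(4(t/2)³)`; this is the `3ζ(4)/(2π³)·t⁻³` term.
In the elementary part `(z - 1/2)·Log z - z + 1/(12z)` only `arg z = π/2 - arctan(1/(2t))` and
`log |z| = log(t/2) + log(1 + 1/(4t²))/2` need expanding, and `u - u³/3 ≤ arctan u ≤ u`,
`v - v²/2 ≤ log(1 + v) ≤ v` leave an error of at most `(1/24 + 1/45)·t⁻³ ≤ (49/640)·t⁻³`.
-/

open Real Complex Filter MeasureTheory

/-- The Riemann–Siegel theta function, defined for `t > 0` via Stirling's (Binet's)
formula: with `s = 1/2 + it`,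
`θ(t) = −(t/2)·log π + Im((s/2 − 1/2)·Log(s/2) − s/2 + (1/2)·log(2π) − ∫₀^∞ B₁({x})/(x + s/2) dx)`,
the improper integral being interpreted as the limit of `∫₀^T` as `T → ∞`. -/
noncomputable def riemannSiegelTheta (t : ℝ) : ℝ :=
  -(t/2) * Real.log π +
    (((1/2 + t * Complex.I)/2 - 1/2) * Complex.log ((1/2 + t * Complex.I)/2)
      - (1/2 + t * Complex.I)/2 + (1/2 : ℂ) * (Real.log (2*π) : ℝ)
      - limUnder Filter.atTop
          (fun T : ℝ => ∫ x in (0:ℝ)..T,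
            (((Int.fract x : ℝ) : ℂ) - 1/2) / ((x:ℂ) + (1/2 + t * Complex.I)/2))).im

open scoped Topology
open Set

theorem Real.arctan_le_self {x : ℝ} (hx : 0 ≤ x) : Real.arctan x ≤ x := by
  simpa [Real.tan_arctan] using le_tan (arctan_nonneg.mpr hx) (arctan_lt_pi_div_two x)

theorem Real.sub_pow_three_div_three_le_arctan {x : ℝ} (hx : 0 ≤ x) :
    x - x ^ 3 / 3 ≤ Real.arctan x := by
  have hmono : Monotone fun y => Real.arctan y - (y - y ^ 3 / 3) :=
    monotone_of_hasDerivAt_nonneg (fun y => (hasDerivAt_arctan y).sub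
      ((hasDerivAt_id' y).sub ((hasDerivAt_pow 3 y).div_const 3))) fun y => by
        norm_num only [Pi.zero_apply, sub_nonneg]
        rw [le_div_iff₀ (by positivity)]
        nlinarith [sq_nonneg (y ^ 2)]
  simpa using hmono hx

theorem Real.sub_sq_div_two_le_log_one_add {x : ℝ} (hx : 0 ≤ x) :
    x - x ^ 2 / 2 ≤ Real.log (1 + x) := by
  refine le_trans ?_ (le_log_one_add_of_nonneg hx)
  rw [le_div_iff₀ (by positivity)]
  nlinarith [pow_nonneg hx 3]

theorem Complex.arg_eq_arctan {z : ℂ} (hre : 0 < z.re) : arg z = Real.arctan (z.im / z.re) := by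
  have h := abs_lt.mp (abs_arg_lt_pi_div_two_iff.mpr (Or.inl hre))
  rw [← tan_arg, Real.arctan_tan h.1 h.2]

section ShiftedPowers

theorem ofReal_add_ne_zero {z : ℂ} (hz : z.im ≠ 0) (x : ℝ) : (x : ℂ) + z ≠ 0 :=
  fun h => hz (by simpa using congrArg Complex.im h)

theorem hasDerivAt_ofReal_add_pow (z : ℂ) (m : ℕ) (x : ℝ) :
    HasDerivAt (fun y : ℝ => ((y : ℂ) + z) ^ m) (m * ((x : ℂ) + z) ^ (m - 1)) x := by
  simpa using ((hasDerivAt_id x).ofReal_comp.add_const z).fun_pow m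

theorem sq_add_sq_le_norm_ofReal_add_sq {z : ℂ} (hz : 0 ≤ z.re) {x : ℝ} (hx : 0 ≤ x) :
    x ^ 2 + z.im ^ 2 ≤ ‖(x : ℂ) + z‖ ^ 2 := by
  rw [Complex.sq_norm, normSq_apply]
  simp only [add_re, ofReal_re, add_im, ofReal_im, zero_add]
  nlinarith

variable {f : ℝ → ℝ} {C : ℝ} {z : ℂ}

theorem intervalIntegrable_ofReal_div_add_pow (hf : Measurable f) (hC : ∀ x, |f x| ≤ C)
    (hz : z.im ≠ 0) (m : ℕ) (a b : ℝ) :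
    IntervalIntegrable (fun x => (f x : ℂ) / ((x : ℂ) + z) ^ m) volume a b := by
  refine (intervalIntegrable_const (c := C / |z.im| ^ m)).mono_fun' ?_ (ae_of_all _ fun x => ?_)
  · exact ((measurable_ofReal.comp hf).div
      ((measurable_ofReal.add_const z).pow_const m)).aestronglyMeasurable
  · have him : |z.im| ≤ ‖(x : ℂ) + z‖ := by
      simpa using abs_im_le_norm ((x : ℂ) + z)
    dsimp only
    rw [norm_div, norm_pow, norm_real, Real.norm_eq_abs]
    exact div_le_div₀ ((abs_nonneg _).trans (hC x)) (hC x) (by positivity)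
      (pow_le_pow_left₀ (abs_nonneg _) him m)

theorem norm_ofReal_div_add_pow_four_le (hC : ∀ x, |f x| ≤ C) (hre : 0 ≤ z.re) (him : z.im ≠ 0)
    {x : ℝ} (hx : 0 ≤ x) :
    ‖(f x : ℂ) / ((x : ℂ) + z) ^ 4‖ ≤ C * ((x ^ 2 + z.im ^ 2) ^ 2)⁻¹ := by
  have hpos : 0 < x ^ 2 + z.im ^ 2 := by positivity
  rw [norm_div, norm_pow, norm_real, Real.norm_eq_abs, ← div_eq_mul_inv,
    show ‖(x : ℂ) + z‖ ^ 4 = (‖(x : ℂ) + z‖ ^ 2) ^ 2 by ring]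
  exact div_le_div₀ ((abs_nonneg _).trans (hC x)) (hC x) (by positivity)
    (pow_le_pow_left₀ hpos.le (sq_add_sq_le_norm_ofReal_add_sq hre hx) 2)

end ShiftedPowers

section InvSqAddSqSq

variable {a : ℝ}

theorem hasDerivAt_antideriv_inv_sq_add_sq_sq (ha : 0 < a) (x : ℝ) :
    HasDerivAt (fun x => x / (2 * a ^ 2 * (x ^ 2 + a ^ 2)) + Real.arctan (x / a) / (2 * a ^ 3))
      ((x ^ 2 + a ^ 2) ^ 2)⁻¹ x := by
  have hpos : 0 < x ^ 2 + a ^ 2 := by positivity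
  refine (((hasDerivAt_id' x).div (((hasDerivAt_pow 2 x).add_const (a ^ 2)).const_mul
    (2 * a ^ 2)) (by positivity)).add
    (((hasDerivAt_id' x).div_const a).arctan.div_const (2 * a ^ 3))).congr_deriv ?_
  field_simp
  ring

theorem tendsto_antideriv_inv_sq_add_sq_sq (ha : 0 < a) :
    Tendsto (fun x => x / (2 * a ^ 2 * (x ^ 2 + a ^ 2)) + Real.arctan (x / a) / (2 * a ^ 3))
      atTop (𝓝 (π / (4 * a ^ 3))) := by
  have hrat : Tendsto (fun x : ℝ => x / (2 * a ^ 2 * (x ^ 2 + a ^ 2))) atTop (𝓝 0) := by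
    refine squeeze_zero' ?_ ?_ ((tendsto_inv_atTop_zero.const_mul (2 * a ^ 2)⁻¹).trans (by simp))
    all_goals filter_upwards [eventually_gt_atTop 0] with x hx
    · positivity
    · rw [div_le_iff₀ (by positivity)]
      field_simp
      nlinarith
  have harctan : Tendsto (fun x => Real.arctan (x / a) / (2 * a ^ 3)) atTop
      (𝓝 (π / 2 / (2 * a ^ 3))) :=
    ((tendsto_nhds_of_tendsto_nhdsWithin tendsto_arctan_atTop).comp
      (tendsto_id.atTop_div_const ha)).div_const _
  convert hrat.add harctan using 2
  ring

theorem integrableOn_Ioi_inv_sq_add_sq_sq (ha : 0 < a) :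
    IntegrableOn (fun x : ℝ => ((x ^ 2 + a ^ 2) ^ 2)⁻¹) (Ioi 0) :=
  integrableOn_Ioi_deriv_of_nonneg' (fun x _ => hasDerivAt_antideriv_inv_sq_add_sq_sq ha x)
    (fun x _ => by positivity) (tendsto_antideriv_inv_sq_add_sq_sq ha)

theorem integral_Ioi_inv_sq_add_sq_sq (ha : 0 < a) :
    ∫ x in Ioi (0 : ℝ), ((x ^ 2 + a ^ 2) ^ 2)⁻¹ = π / (4 * a ^ 3) := by
  rw [integral_Ioi_of_hasDerivAt_of_nonneg'
    (fun x _ => hasDerivAt_antideriv_inv_sq_add_sq_sq ha x)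
    (fun x _ => by positivity) (tendsto_antideriv_inv_sq_add_sq_sq ha)]
  simp

end InvSqAddSqSq

section IntegralIoi

variable {f : ℝ → ℝ} {C : ℝ} {z : ℂ}

theorem integrableOn_Ioi_ofReal_div_add_pow_four (hf : Measurable f) (hC : ∀ x, |f x| ≤ C)
    (hre : 0 ≤ z.re) (him : 0 < z.im) :
    IntegrableOn (fun x => (f x : ℂ) / ((x : ℂ) + z) ^ 4) (Ioi 0) :=
  ((integrableOn_Ioi_inv_sq_add_sq_sq him).const_mul C).mono'
    ((measurable_ofReal.comp hf).div
      ((measurable_ofReal.add_const z).pow_const 4)).aestronglyMeasurable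
    ((ae_restrict_mem measurableSet_Ioi).mono fun _ hx =>
      norm_ofReal_div_add_pow_four_le hC hre him.ne' (le_of_lt hx))

theorem norm_integral_Ioi_ofReal_div_add_pow_four_le (hC : ∀ x, |f x| ≤ C) (hre : 0 ≤ z.re)
    (him : 0 < z.im) :
    ‖∫ x in Ioi (0 : ℝ), (f x : ℂ) / ((x : ℂ) + z) ^ 4‖ ≤ C * (π / (4 * z.im ^ 3)) := by
  rw [← integral_Ioi_inv_sq_add_sq_sq him, ← integral_const_mul]
  exact norm_integral_le_of_norm_le ((integrableOn_Ioi_inv_sq_add_sq_sq him).const_mul C)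
    ((ae_restrict_mem measurableSet_Ioi).mono fun _ hx =>
      norm_ofReal_div_add_pow_four_le hC hre him.ne' (le_of_lt hx))

end IntegralIoi

/-- The `Pₖ` of the Euler–Maclaurin formula. Unlike Mathlib's `periodizedBernoulli` it lives on `ℝ`
and is divided by `k!`, so that `Pₖ₊₁' = Pₖ` away from the integers. -/
noncomputable def periodicBernoulli (k : ℕ) (x : ℝ) : ℝ :=
  bernoulliFun k (Int.fract x) / k.factorial

theorem periodicBernoulli_one (x : ℝ) : periodicBernoulli 1 x = Int.fract x - 1 / 2 := by
  simp [periodicBernoulli]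

theorem periodicBernoulli_eval_zero (k : ℕ) :
    periodicBernoulli k 0 = bernoulli k / k.factorial := by
  simp [periodicBernoulli, bernoulliFun_eval_zero]

theorem measurable_periodicBernoulli (k : ℕ) : Measurable (periodicBernoulli k) :=
  ((continuous_bernoulliFun k).measurable.comp measurable_fract).div_const _

theorem continuous_periodicBernoulli {k : ℕ} (hk : k ≠ 1) : Continuous (periodicBernoulli k) :=
  ((continuous_bernoulliFun k).continuousOn.comp_fract''
    (bernoulliFun_endpoints_eq_of_ne_one hk).symm).div_const _

theorem exists_abs_periodicBernoulli_le (k : ℕ) : ∃ C, ∀ x, |periodicBernoulli k x| ≤ C := by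
  obtain ⟨C, hC⟩ := (isCompact_Icc (a := (0 : ℝ)) (b := 1)).exists_bound_of_continuousOn
    (continuous_bernoulliFun k).continuousOn
  refine ⟨C / k.factorial, fun x => ?_⟩
  rw [periodicBernoulli, abs_div, Nat.abs_cast]
  gcongr
  exact hC _ ⟨Int.fract_nonneg x, (Int.fract_lt_one x).le⟩

theorem hasDerivAt_periodicBernoulli_succ (k : ℕ) {x : ℝ} (hx : x ∉ range ((↑) : ℤ → ℝ)) :
    HasDerivAt (periodicBernoulli (k + 1)) (periodicBernoulli k x) x := by
  have hfloor : (⌊x⌋ : ℝ) < x := (Int.floor_le x).lt_of_ne fun h => hx ⟨_, h⟩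
  have hlocal : (fun y => bernoulliFun (k + 1) (y - ⌊x⌋) / (k + 1).factorial)
      =ᶠ[𝓝 x] periodicBernoulli (k + 1) := by
    filter_upwards [isOpen_Ioo.mem_nhds ⟨hfloor, Int.lt_floor_add_one x⟩] with y hy
    rw [periodicBernoulli, Int.fract, Int.floor_eq_iff.mpr ⟨hy.1.le, hy.2⟩]
  have hderiv := (((hasDerivAt_bernoulliFun (k + 1) _).comp x
    ((hasDerivAt_id x).sub_const (⌊x⌋ : ℝ))).div_const ((k + 1).factorial : ℝ))
  refine (hderiv.congr_of_eventuallyEq hlocal.symm).congr_deriv ?_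
  rw [periodicBernoulli, Int.fract, Nat.factorial_succ]
  push_cast
  field_simp
  simp

theorem abs_periodicBernoulli_two_mul_le {k : ℕ} (hk : k ≠ 0) (x : ℝ) :
    |periodicBernoulli (2 * k) x|
      ≤ 2 * (∑' n : ℕ, 1 / (n : ℝ) ^ (2 * k)) / (2 * π) ^ (2 * k) := by
  have hfourier := hasSum_one_div_nat_pow_mul_cos hk
    ⟨Int.fract_nonneg x, (Int.fract_lt_one x).le⟩
  have hzeta : HasSum (fun n : ℕ => 1 / (n : ℝ) ^ (2 * k)) _ :=
    (Real.summable_one_div_nat_pow.mpr (by omega)).hasSum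
  have hle := hfourier.norm_le_of_bounded hzeta fun n => by
    rw [Real.norm_eq_abs, abs_mul, abs_of_nonneg (by positivity)]
    exact mul_le_of_le_one_right (by positivity) (abs_cos_le_one _)
  rw [Real.norm_eq_abs] at hle
  have hpos : (0 : ℝ) < (2 * π) ^ (2 * k) := by positivity
  rw [periodicBernoulli, le_div_iff₀ hpos]
  calc |bernoulliFun (2 * k) (Int.fract x) / (2 * k).factorial| * (2 * π) ^ (2 * k)
      = 2 * |(-1 : ℝ) ^ (k + 1) * (2 * π) ^ (2 * k) / 2 / (2 * k).factorial *
          bernoulliFun (2 * k) (Int.fract x)| := by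
        simp only [abs_mul, abs_div, abs_pow, abs_neg, abs_one, one_pow, abs_two, Nat.abs_cast,
          abs_of_pos hpos]
        ring
    _ ≤ 2 * ∑' n : ℕ, 1 / (n : ℝ) ^ (2 * k) := by gcongr; exact hle

theorem abs_periodicBernoulli_four_le (x : ℝ) : |periodicBernoulli 4 x| ≤ 1 / 720 := by
  have h := abs_periodicBernoulli_two_mul_le two_ne_zero x
  rw [hasSum_zeta_four.tsum_eq] at h
  convert h using 1
  field_simp
  ring

section PeriodicBernoulliIntegrals

variable {z : ℂ}

theorem intervalIntegrable_periodicBernoulli_div_add_pow (k : ℕ) (hz : z.im ≠ 0) (m : ℕ)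
    (a b : ℝ) :
    IntervalIntegrable (fun x => (periodicBernoulli k x : ℂ) / ((x : ℂ) + z) ^ m) volume a b :=
  have ⟨_, hC⟩ := exists_abs_periodicBernoulli_le k
  intervalIntegrable_ofReal_div_add_pow (measurable_periodicBernoulli k) hC hz m a b

theorem integral_periodicBernoulli_div_add_pow {k : ℕ} (hk : k ≠ 0) (hz : z.im ≠ 0) (m : ℕ)
    (a b : ℝ) :
    ∫ x in a..b, (periodicBernoulli k x : ℂ) / ((x : ℂ) + z) ^ m =
      periodicBernoulli (k + 1) b / ((b : ℂ) + z) ^ m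
        - periodicBernoulli (k + 1) a / ((a : ℂ) + z) ^ m
        + m * ∫ x in a..b, (periodicBernoulli (k + 1) x : ℂ) / ((x : ℂ) + z) ^ (m + 1) := by
  have hcont : Continuous fun x : ℝ => (periodicBernoulli (k + 1) x : ℂ) / ((x : ℂ) + z) ^ m :=
    (continuous_ofReal.comp (continuous_periodicBernoulli (by omega))).div (by fun_prop)
      fun x => pow_ne_zero m (ofReal_add_ne_zero hz x)
  have hderiv : ∀ x ∉ range ((↑) : ℤ → ℝ),
      HasDerivAt (fun x : ℝ => (periodicBernoulli (k + 1) x : ℂ) / ((x : ℂ) + z) ^ m)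
        ((periodicBernoulli k x : ℂ) / ((x : ℂ) + z) ^ m
          - m * ((periodicBernoulli (k + 1) x : ℂ) / ((x : ℂ) + z) ^ (m + 1))) x := by
    intro x hx
    have hw := ofReal_add_ne_zero hz x
    refine ((hasDerivAt_periodicBernoulli_succ k hx).ofReal_comp.div
      (hasDerivAt_ofReal_add_pow z m x) (pow_ne_zero m hw)).congr_deriv ?_
    rcases m with _ | m
    · simp
    · rw [Nat.add_sub_cancel]
      field_simp
      ring
  have hint := (intervalIntegrable_periodicBernoulli_div_add_pow k hz m a b).sub
    ((intervalIntegrable_periodicBernoulli_div_add_pow (k + 1) hz (m + 1) a b).const_mul (m : ℂ))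
  have hftc := integral_eq_of_hasDerivAt_off_countable _ _ (countable_range _)
    hcont.continuousOn (fun x hx => hderiv x hx.2) hint
  rw [intervalIntegral.integral_sub (intervalIntegrable_periodicBernoulli_div_add_pow k hz m a b)
    ((intervalIntegrable_periodicBernoulli_div_add_pow (k + 1) hz (m + 1) a b).const_mul _),
    intervalIntegral.integral_const_mul] at hftc
  linear_combination hftc

theorem tendsto_periodicBernoulli_div_add_pow_atTop (k : ℕ) {m : ℕ} (hm : m ≠ 0) (z : ℂ) :
    Tendsto (fun T : ℝ => (periodicBernoulli k T : ℂ) / ((T : ℂ) + z) ^ m) atTop (𝓝 0) := by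
  obtain ⟨C, hC⟩ := exists_abs_periodicBernoulli_le k
  have hinv : Tendsto (fun T : ℝ => (((T : ℂ) + z) ^ m)⁻¹) atTop (𝓝 0) := by
    have h := (tendsto_add_const_cobounded z).comp (RCLike.tendsto_ofReal_atTop_cobounded ℂ)
    simpa [zero_pow hm] using (tendsto_inv₀_cobounded.comp h).pow m
  simpa [div_eq_mul_inv, mul_comm] using
    hinv.zero_mul_isBoundedUnder_le (g := fun T => (periodicBernoulli k T : ℂ))
      (isBoundedUnder_of ⟨C, fun T => by simpa using hC T⟩)

end PeriodicBernoulliIntegrals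

noncomputable def binetRemainder (z : ℂ) : ℂ :=
  (360 * z ^ 3)⁻¹ + 6 * ∫ x in Ioi (0 : ℝ), (periodicBernoulli 4 x : ℂ) / ((x : ℂ) + z) ^ 4

theorem tendsto_integral_fract_sub_half_div_add {z : ℂ} (hre : 0 ≤ z.re) (him : 0 < z.im) :
    Tendsto (fun T : ℝ => ∫ x in (0 : ℝ)..T, (((Int.fract x : ℝ) : ℂ) - 1 / 2) / ((x : ℂ) + z))
      atTop (𝓝 (-(12 * z)⁻¹ + binetRemainder z)) := by
  have hparts (T : ℝ) : ∫ x in (0 : ℝ)..T, (((Int.fract x : ℝ) : ℂ) - 1 / 2) / ((x : ℂ) + z) =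
      periodicBernoulli 2 T / ((T : ℂ) + z) ^ 1 + periodicBernoulli 3 T / ((T : ℂ) + z) ^ 2
        + 2 * (periodicBernoulli 4 T / ((T : ℂ) + z) ^ 3)
        - (periodicBernoulli 2 0 / z + periodicBernoulli 3 0 / z ^ 2
          + 2 * (periodicBernoulli 4 0 / z ^ 3))
        + 6 * ∫ x in (0 : ℝ)..T, (periodicBernoulli 4 x : ℂ) / ((x : ℂ) + z) ^ 4 := by
    have hP1 : ∫ x in (0 : ℝ)..T, (((Int.fract x : ℝ) : ℂ) - 1 / 2) / ((x : ℂ) + z) =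
        ∫ x in (0 : ℝ)..T, (periodicBernoulli 1 x : ℂ) / ((x : ℂ) + z) ^ 1 := by
      simp [periodicBernoulli_one]
    rw [hP1, integral_periodicBernoulli_div_add_pow one_ne_zero him.ne',
      integral_periodicBernoulli_div_add_pow two_ne_zero him.ne',
      integral_periodicBernoulli_div_add_pow three_ne_zero him.ne']
    push_cast
    ring
  have hJ : Tendsto (fun T => ∫ x in (0 : ℝ)..T, (periodicBernoulli 4 x : ℂ) / ((x : ℂ) + z) ^ 4)
      atTop (𝓝 (∫ x in Ioi (0 : ℝ), (periodicBernoulli 4 x : ℂ) / ((x : ℂ) + z) ^ 4)) :=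
    intervalIntegral_tendsto_integral_Ioi 0 (integrableOn_Ioi_ofReal_div_add_pow_four
      (measurable_periodicBernoulli 4) abs_periodicBernoulli_four_le hre him) tendsto_id
  have hlim := ((((tendsto_periodicBernoulli_div_add_pow_atTop 2 one_ne_zero z).add
    (tendsto_periodicBernoulli_div_add_pow_atTop 3 two_ne_zero z)).add
    ((tendsto_periodicBernoulli_div_add_pow_atTop 4 three_ne_zero z).const_mul 2)).sub_const
    (periodicBernoulli 2 0 / z + periodicBernoulli 3 0 / z ^ 2
      + 2 * (periodicBernoulli 4 0 / z ^ 3))).add (hJ.const_mul 6)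
  have hvalues : periodicBernoulli 2 0 = 1 / 12 ∧ periodicBernoulli 3 0 = 0 ∧
      periodicBernoulli 4 0 = -1 / 720 := by
    norm_num [periodicBernoulli_eval_zero, bernoulli_eq_bernoulli'_of_ne_one, bernoulli'_two,
      bernoulli'_three, bernoulli'_four, Nat.factorial]
  refine Tendsto.congr (fun T => (hparts T).symm) ?_
  convert hlim using 2
  rw [binetRemainder, hvalues.1, hvalues.2.1, hvalues.2.2]
  push_cast
  ring

theorem norm_binetRemainder_le {z : ℂ} (hre : 0 ≤ z.re) (him : 0 < z.im) :
    ‖binetRemainder z‖ ≤ (1 / 360 + π / 480) / z.im ^ 3 := by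
  have hpow : ‖(360 * z ^ 3)⁻¹‖ ≤ 1 / 360 / z.im ^ 3 := by
    rw [norm_inv, norm_mul, norm_pow, Complex.norm_ofNat, div_div, one_div]
    gcongr
    exact (le_abs_self _).trans (abs_im_le_norm z)
  have hint := norm_integral_Ioi_ofReal_div_add_pow_four_le abs_periodicBernoulli_four_le hre him
  calc ‖binetRemainder z‖
      ≤ ‖(360 * z ^ 3)⁻¹‖ + 6 * ‖∫ x in Ioi (0 : ℝ),
          (periodicBernoulli 4 x : ℂ) / ((x : ℂ) + z) ^ 4‖ := by
        refine (norm_add_le _ _).trans_eq ?_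
        rw [norm_mul, Complex.norm_ofNat]
    _ ≤ 1 / 360 / z.im ^ 3 + 6 * (1 / 720 * (π / (4 * z.im ^ 3))) := by gcongr
    _ = (1 / 360 + π / 480) / z.im ^ 3 := by field_simp; ring

noncomputable def thetaCorrection (t : ℝ) : ℝ :=
  t / 4 * Real.log (1 + 1 / (4 * t ^ 2)) + Real.arctan (1 / (2 * t)) / 4
    - 2 * t / (3 * (1 + 4 * t ^ 2))

theorem im_stirling_main_eq {t : ℝ} (ht : 0 < t) :
    -(t / 2) * Real.log π + (((1 / 2 + t * I) / 2 - 1 / 2) * Complex.log ((1 / 2 + t * I) / 2)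
      - (1 / 2 + t * I) / 2 + (1 / 2 : ℂ) * (Real.log (2 * π) : ℝ)
      + (12 * ((1 / 2 + t * I) / 2))⁻¹).im
      = t / 2 * Real.log (t / (2 * π * Real.exp 1)) - π / 8 + thetaCorrection t := by
  set z : ℂ := (1 / 2 + t * I) / 2 with hz
  have hre : z.re = 1 / 4 := by norm_num [hz]
  have him : z.im = t / 2 := by simp [hz]
  have harg : arg z = π / 2 - Real.arctan (1 / (2 * t)) := by
    rw [arg_eq_arctan (by rw [hre]; norm_num), hre, him,
      show t / 2 / (1 / 4) = (1 / (2 * t))⁻¹ by field_simp; ring,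
      arctan_inv_of_pos (by positivity)]
  have hnorm : Real.log ‖z‖ = Real.log (t / 2) + Real.log (1 + 1 / (4 * t ^ 2)) / 2 := by
    have hsq : ‖z‖ ^ 2 = (t / 2) ^ 2 * (1 + 1 / (4 * t ^ 2)) := by
      rw [Complex.sq_norm, normSq_apply, hre, him]; field_simp; ring
    have h := congrArg Real.log hsq
    rw [Real.log_pow, Real.log_mul (by positivity) (by positivity), Real.log_pow] at h
    push_cast at h
    linarith
  have hinv : ((12 * z)⁻¹).im = -(2 * t / (3 * (1 + 4 * t ^ 2))) := by
    rw [inv_im, normSq_apply]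
    simp only [mul_re, mul_im, hre, him]
    norm_num
    field_simp
    ring
  have hlog : Real.log (t / (2 * π * Real.exp 1)) = Real.log t - Real.log 2 - Real.log π - 1 := by
    rw [Real.log_div ht.ne' (by positivity), Real.log_mul (by positivity) (exp_ne_zero 1),
      Real.log_mul two_ne_zero pi_ne_zero, Real.log_exp]
    ring
  have hhalf : Real.log (t / 2) = Real.log t - Real.log 2 := Real.log_div ht.ne' two_ne_zero
  simp only [add_im, sub_im, mul_im, log_re, log_im, sub_re, hinv, hre, him, harg, hnorm,
    ofReal_im, ofReal_re, hlog, hhalf, thetaCorrection]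
  norm_num
  ring

theorem abs_thetaCorrection_sub_le {t : ℝ} (ht : 0 < t) :
    |thetaCorrection t - 1 / (48 * t)| ≤ 1 / (24 * t ^ 3) := by
  have hu : 0 ≤ 1 / (2 * t) := by positivity
  have hv : 0 ≤ 1 / (4 * t ^ 2) := by positivity
  have hlog_le : t / 4 * Real.log (1 + 1 / (4 * t ^ 2)) ≤ 1 / (16 * t) := by
    calc _ ≤ t / 4 * (1 / (4 * t ^ 2)) := by
          gcongr
          linarith [Real.log_le_sub_one_of_pos (show 0 < 1 + 1 / (4 * t ^ 2) by positivity)]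
      _ = 1 / (16 * t) := by field_simp; ring
  have hlog_ge : 1 / (16 * t) - 1 / (128 * t ^ 3) ≤ t / 4 * Real.log (1 + 1 / (4 * t ^ 2)) := by
    calc _ = t / 4 * (1 / (4 * t ^ 2) - (1 / (4 * t ^ 2)) ^ 2 / 2) := by field_simp; ring
      _ ≤ _ := by gcongr; exact Real.sub_sq_div_two_le_log_one_add hv
  have harctan_le := Real.arctan_le_self hu
  have harctan_ge : 1 / (2 * t) - 1 / (24 * t ^ 3) ≤ Real.arctan (1 / (2 * t)) := by
    calc _ = 1 / (2 * t) - (1 / (2 * t)) ^ 3 / 3 := by field_simp; ring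
      _ ≤ _ := Real.sub_pow_three_div_three_le_arctan hu
  have hrat : 2 * t / (3 * (1 + 4 * t ^ 2)) = 1 / (6 * t) - 1 / (6 * t * (1 + 4 * t ^ 2)) := by
    field_simp; ring
  have hrat_le : 1 / (6 * t * (1 + 4 * t ^ 2)) ≤ 1 / (24 * t ^ 3) :=
    one_div_le_one_div_of_le (by positivity) (by nlinarith)
  have hrat_nonneg : 0 ≤ 1 / (6 * t * (1 + 4 * t ^ 2)) := by positivity
  have hleading : 1 / (16 * t) + 1 / (2 * t) / 4 - 1 / (6 * t) - 1 / (48 * t) = 0 := by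
    field_simp; ring
  have hcubic : 1 / (128 * t ^ 3) + 1 / (24 * t ^ 3) / 4 ≤ 1 / (24 * t ^ 3) := by
    field_simp; norm_num
  rw [thetaCorrection, hrat, abs_le]
  constructor <;> linarith

/-- For every real `t > 1`,
`|θ(t) − ((t/2)·log(t/(2πe)) − π/8 + 1/(48t))| ≤ (49/640 + 3ζ(4)/(2π³))·t⁻³`,
where `ζ(4) = π⁴/90`. -/
theorem stmt_0 (t : ℝ) (ht : 1 < t) :
    |riemannSiegelTheta t - (t/2 * Real.log (t/(2*π*Real.exp 1)) - π/8 + 1/(48*t))|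
      ≤ (49/640 + 3*(π^4/90)/(2*π^3)) * t⁻¹^3 := by
  have ht0 : 0 < t := by linarith
  have hre : 0 ≤ ((1 / 2 + t * I) / 2 : ℂ).re := by norm_num
  have him : ((1 / 2 + t * I) / 2 : ℂ).im = t / 2 := by simp
  have him_pos : 0 < ((1 / 2 + t * I) / 2 : ℂ).im := by rw [him]; positivity
  have hθ : riemannSiegelTheta t - (t/2 * Real.log (t/(2*π*Real.exp 1)) - π/8 + 1/(48*t))
      = thetaCorrection t - 1 / (48 * t) - (binetRemainder ((1 / 2 + t * I) / 2)).im := by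
    have hmain := im_stirling_main_eq ht0
    rw [riemannSiegelTheta, (tendsto_integral_fract_sub_half_div_add hre him_pos).limUnder_eq]
    simp only [sub_im, add_im, neg_im] at hmain ⊢
    linear_combination hmain
  have hR := (abs_im_le_norm _).trans (norm_binetRemainder_le hre him_pos)
  rw [him] at hR
  rw [hθ]
  calc _ ≤ |thetaCorrection t - 1 / (48 * t)| + |(binetRemainder ((1 / 2 + t * I) / 2)).im| :=
        abs_sub _ _
    _ ≤ 1 / (24 * t ^ 3) + (1 / 360 + π / 480) / (t / 2) ^ 3 :=
        add_le_add (abs_thetaCorrection_sub_le ht0) hR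
    _ = (23 / 360 + π / 60) * t⁻¹ ^ 3 := by field_simp; ring
    _ ≤ (49/640 + 3*(π^4/90)/(2*π^3)) * t⁻¹^3 := by
        rw [show 3 * (π ^ 4 / 90) / (2 * π ^ 3) = π / 60 by field_simp; ring]
        exact mul_le_mul_of_nonneg_right (by linarith) (by positivity)
end

section
/- For every real t > 1, one has 0 ≤ (−π/2 + 1/(2t)) + arg(1/4 + it/2) ≤ 1/(24·t³), where arg denotes the principal argument of a complex number. -/
open Real Complex

/-!
Since `1/4 + (t/2) i` lies in the right half-plane, its argument is `arctan (2t)`, which equals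
`π/2 - arctan (1/(2t))`. The quantity to bound is therefore `x - arctan x` with `x = 1/(2t) > 0`,
and the alternating Taylor bounds `x - x³/3 ≤ arctan x ≤ x` give `0 ≤ x - arctan x ≤ x³/3`.
-/

namespace Real

theorem arctan_le_self_s3 {x : ℝ} (hx : 0 ≤ x) : arctan x ≤ x := by
  simpa only [tan_arctan] using le_tan (arctan_nonneg.mpr hx) (arctan_lt_pi_div_two x)

/-- `arctan y - y + y³/3` has derivative `y⁴ / (1 + y²) ≥ 0`. -/
theorem monotone_arctan_sub_self_add_pow_three_div_three :
    Monotone fun y : ℝ => arctan y - y + y ^ 3 / 3 := by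
  refine monotone_of_hasDerivAt_nonneg
    (f' := fun y => 1 / (1 + y ^ 2) - 1 + y ^ 2) (fun y => ?_) (fun y => ?_)
  · exact (((hasDerivAt_arctan y).sub (hasDerivAt_id' y)).add
      ((hasDerivAt_pow 3 y).div_const 3)).congr_deriv (by norm_num)
  · have key : 1 / (1 + y ^ 2) - 1 + y ^ 2 = y ^ 4 / (1 + y ^ 2) := by
      field_simp; ring
    simp only [Pi.zero_apply, key]
    positivity

theorem self_sub_pow_three_div_three_le_arctan {x : ℝ} (hx : 0 ≤ x) :
    x - x ^ 3 / 3 ≤ arctan x := by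
  have := monotone_arctan_sub_self_add_pow_three_div_three hx
  simp only [arctan_zero] at this
  linarith

end Real

theorem Complex.arg_eq_arctan_of_re_pos {z : ℂ} (hz : 0 < z.re) :
    arg z = Real.arctan (z.im / z.re) := by
  rw [← tan_arg, Real.arctan_tan (neg_pi_div_two_lt_arg_iff.mpr (Or.inl hz))
    (arg_lt_pi_div_two_iff.mpr (Or.inl hz))]

/-- For every real `t > 1`,
`0 ≤ (−π/2 + 1/(2t)) + arg(1/4 + it/2) ≤ 1/(24 t³)`. -/
theorem stmt_3 (t : ℝ) (ht : 1 < t) :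
    0 ≤ (-(π/2) + 1/(2*t)) + Complex.arg (1/4 + t/2 * Complex.I) ∧
    (-(π/2) + 1/(2*t)) + Complex.arg (1/4 + t/2 * Complex.I) ≤ 1/(24*t^3) := by
  have ht0 : 0 < t := one_pos.trans ht
  have hre : (1/4 + t/2 * I).re = 1/4 := by simp
  have him : (1/4 + t/2 * I).im = t/2 := by simp
  have harg : arg (1/4 + t/2 * I) = π/2 - Real.arctan (2*t)⁻¹ := by
    rw [arg_eq_arctan_of_re_pos (by norm_num [hre]), hre, him,
      show t/2 / (1/4) = 2*t by ring, Real.arctan_inv_of_pos (by positivity)]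
    ring
  have hx : 0 ≤ (2*t)⁻¹ := by positivity
  have hcube : (2*t)⁻¹ ^ 3 / 3 = 1/(24*t^3) := by
    field_simp; ring
  rw [harg, one_div (2*t)]
  constructor
  · linarith [Real.arctan_le_self_s3 hx]
  · linarith [Real.self_sub_pow_three_div_three_le_arctan hx]
end

section
/- For every real t > 1, with s = 1/2 + it, one has |(1/3)·∫₀^∞ B₃({x})/(x + s/2)³ dx| ≤ (1/60 + 3ζ(4)/(2π³))·t⁻³. -/
/-!
Put `a = s/2`, so `Re a = 1/4`, and let `B̃ₖ = Bₖ ∘ fract`. For `k ≥ 3` the function `B̃ₖ` is `C¹`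
with `B̃ₖ' = k B̃ₖ₋₁`, so two integrations by parts, with `B₄(0) = -1/30` and `B₅(0) = 0`, give
`∫₀^∞ B̃₃(x)/(x+a)³ dx = 1/(120 a³) + (3/5) ∫₀^∞ B̃₅(x)/(x+a)⁵ dx`.
Since `|B₅| ≤ 1/36` on `[0,1]` and `|x+a|² ≥ x² + |a|²`, the last integral is at most
`(1/36) ∫₀^∞ (x² + |a|²)^(-5/2) dx = 1/(54 |a|⁴)`. Finally `|a| ≥ t/2` and
`|a|⁴ = (1+4t²)²/256 ≥ 25t³/256` bound the whole expression by `203/(3375 t³)`, which is less than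
`(1 + π)/(60 t³)`; note `3ζ(4)/(2π³) = π/60`.
-/

open Real Complex MeasureTheory Set Filter Topology

theorem fract_eq_sub_of_mem_Ico {x : ℝ} {n : ℤ} (hx : x ∈ Ico (n : ℝ) (n + 1)) :
    Int.fract x = x - n :=
  Int.fract_eq_iff.2 ⟨sub_nonneg.2 hx.1, by linarith [hx.2], n, by ring⟩

theorem hasDerivAt_comp_fract {f f' : ℝ → ℝ} (hf : ∀ x, HasDerivAt f (f' x) x)
    (hf₁ : f 1 = f 0) (hf'₁ : f' 1 = f' 0) (x : ℝ) :
    HasDerivAt (fun y ↦ f (Int.fract y)) (f' (Int.fract x)) x := by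
  set n := ⌊x⌋
  have hx : x ∈ Ico (n : ℝ) (n + 1) := ⟨Int.floor_le x, Int.lt_floor_add_one x⟩
  have right : HasDerivAt (fun y ↦ f (y - n)) (f' (Int.fract x)) x :=
    (hf _).comp_sub_const x n
  have hfract : x - n = Int.fract x := Int.self_sub_floor x
  rcases (Int.fract_nonneg x).eq_or_lt' with h₀ | h₀
  · -- at an integer, `f ∘ fract` is `f (· - (n - 1))` on the left and `f (· - n)` on the right
    have left : HasDerivAt (fun y ↦ f (y - (n - 1))) (f' (Int.fract x)) x := by
      have := (hf (x - (n - 1))).comp_sub_const x (n - 1)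
      rwa [show x - (n - 1) = 1 by linarith, hf'₁, ← h₀] at this
    rw [← hasDerivWithinAt_univ, ← Iic_union_Ici (a := x)]
    refine (left.hasDerivWithinAt.congr_of_eventuallyEq ?_ ?_).union
      (right.hasDerivWithinAt.congr_of_eventuallyEq ?_ ?_)
    · filter_upwards [Ioc_mem_nhdsLE (show x - 1 < x by linarith)] with y hy
      rcases hy.2.eq_or_lt with rfl | hyx
      · rw [h₀, show y - (n - 1) = 1 by linarith, hf₁]
      · have hy' : y ∈ Ico ((n - 1 : ℤ) : ℝ) ((n - 1 : ℤ) + 1) := by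
          push_cast; exact ⟨by linarith [hy.1], by linarith⟩
        rw [fract_eq_sub_of_mem_Ico hy']
        push_cast; ring
    · rw [h₀, show x - (n - 1) = 1 by linarith, hf₁]
    · filter_upwards [Ico_mem_nhdsGE hx.2] with y hy
      rw [fract_eq_sub_of_mem_Ico ⟨hx.1.trans hy.1, hy.2⟩]
    · rw [hfract]
  · refine right.congr_of_eventuallyEq ?_
    filter_upwards [Ioo_mem_nhds (show (n : ℝ) < x by linarith) hx.2] with y hy
    rw [fract_eq_sub_of_mem_Ico (Ioo_subset_Ico_self hy)]

theorem bernoulli_four_eq : bernoulli 4 = -1 / 30 := by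
  rw [bernoulli_eq_bernoulli'_of_ne_one (by norm_num), bernoulli'_four]

theorem bernoulli_five_eq : bernoulli 5 = 0 :=
  bernoulli_eq_zero_of_odd ⟨2, rfl⟩ (by norm_num)

theorem bernoulliFun_three (x : ℝ) : bernoulliFun 3 x = x ^ 3 - 3 / 2 * x ^ 2 + 1 / 2 * x := by
  simp [bernoulliFun, Polynomial.bernoulli_def, Finset.sum_range_succ,
    bernoulli_eq_zero_of_odd (n := 3) ⟨1, rfl⟩ (by norm_num)]
  ring

theorem bernoulliFun_five (x : ℝ) :
    bernoulliFun 5 x = x ^ 5 - 5 / 2 * x ^ 4 + 5 / 3 * x ^ 3 - 1 / 6 * x := by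
  simp [bernoulliFun, Polynomial.bernoulli_def, Finset.sum_range_succ,
    bernoulli_eq_zero_of_odd (n := 3) ⟨1, rfl⟩ (by norm_num), bernoulli_four_eq, bernoulli_five_eq]
  norm_num [Nat.choose]
  ring

theorem abs_bernoulliFun_five_le {x : ℝ} (hx : x ∈ Icc (0 : ℝ) 1) :
    |bernoulliFun 5 x| ≤ 1 / 36 := by
  -- with `u = x (1 - x) ∈ [0, 1/4]`, `B₅(x) = (x - 1/2) u (u + 1/3)` and `(x - 1/2)² = 1/4 - u`
  set u := x - x ^ 2
  have hu₀ : 0 ≤ u := by nlinarith [hx.1, hx.2]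
  have hu₁ : u ≤ 1 / 4 := by nlinarith [sq_nonneg (x - 1 / 2)]
  have hsq : bernoulliFun 5 x ^ 2 = (1 / 4 - u) * u ^ 2 * (u + 1 / 3) ^ 2 := by
    rw [bernoulliFun_five]; ring
  rw [← sq_le_sq₀ (abs_nonneg _) (by norm_num), sq_abs, hsq]
  nlinarith [mul_nonneg (mul_nonneg hu₀ hu₀) hu₀, sq_nonneg (u - 1 / 5),
    mul_nonneg hu₀ (sq_nonneg (u - 1 / 5))]

noncomputable def periodicBernoulliFun (k : ℕ) (x : ℝ) : ℝ :=
  bernoulliFun k (Int.fract x)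

theorem periodicBernoulliFun_zero (k : ℕ) : periodicBernoulliFun k 0 = bernoulli k := by
  rw [periodicBernoulliFun, Int.fract_zero, bernoulliFun_eval_zero]

theorem hasDerivAt_periodicBernoulliFun {k : ℕ} (hk : 3 ≤ k) (x : ℝ) :
    HasDerivAt (periodicBernoulliFun k) (k * periodicBernoulliFun (k - 1) x) x :=
  hasDerivAt_comp_fract (hasDerivAt_bernoulliFun k) (bernoulliFun_endpoints_eq_of_ne_one (by omega))
    (by rw [bernoulliFun_endpoints_eq_of_ne_one (by omega)]) x

theorem measurable_periodicBernoulliFun (k : ℕ) : Measurable (periodicBernoulliFun k) :=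
  (continuous_bernoulliFun k).measurable.comp measurable_fract

theorem exists_abs_periodicBernoulliFun_le (k : ℕ) : ∃ M, ∀ x, |periodicBernoulliFun k x| ≤ M := by
  obtain ⟨M, hM⟩ := isCompact_Icc.exists_bound_of_continuousOn (s := Icc (0 : ℝ) 1)
    (continuous_bernoulliFun k).continuousOn
  exact ⟨M, fun x ↦ hM _ ⟨Int.fract_nonneg x, (Int.fract_lt_one x).le⟩⟩

theorem abs_periodicBernoulliFun_five_le (x : ℝ) : |periodicBernoulliFun 5 x| ≤ 1 / 36 :=
  abs_bernoulliFun_five_le ⟨Int.fract_nonneg x, (Int.fract_lt_one x).le⟩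

section SqAddPowNegFiveHalves

variable {c : ℝ}

theorem hasDerivAt_div_sqrt_sq_add (hc : 0 < c) (x : ℝ) :
    HasDerivAt (fun y ↦ y / √(y ^ 2 + c)) (c / ((x ^ 2 + c) * √(x ^ 2 + c))) x := by
  have hpos : 0 < x ^ 2 + c := by positivity
  have hs : HasDerivAt (fun y ↦ √(y ^ 2 + c)) (2 * x / (2 * √(x ^ 2 + c))) x :=
    (((hasDerivAt_pow 2 x).add_const c).sqrt hpos.ne').congr_deriv (by simp)
  refine ((hasDerivAt_id x).div hs (sqrt_pos.2 hpos).ne').congr_deriv ?_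
  have hsq := sq_sqrt hpos.le
  have := (sqrt_pos.2 hpos).ne'
  simp only [id]
  field_simp
  linear_combination x ^ 2 * hsq

theorem tendsto_div_sqrt_sq_add (hc : 0 < c) :
    Tendsto (fun y ↦ y / √(y ^ 2 + c)) atTop (𝓝 1) := by
  have hlim : Tendsto (fun y : ℝ ↦ √(1 - c / (y ^ 2 + c))) atTop (𝓝 1) := by
    simpa using ((tendsto_const_nhds.div_atTop
      (tendsto_atTop_add_const_right _ c (tendsto_pow_atTop two_ne_zero))).const_sub 1).sqrt
  refine hlim.congr' ?_
  filter_upwards [eventually_ge_atTop 0] with y hy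
  have hpos : 0 < y ^ 2 + c := by positivity
  rw [one_sub_div hpos.ne', add_sub_cancel_right, sqrt_div' _ hpos.le, sqrt_sq hy]

theorem hasDerivAt_sq_add_pow_neg_five_halves_primitive (hc : 0 < c) (x : ℝ) :
    HasDerivAt (fun y ↦ y / √(y ^ 2 + c) * (3 - (y / √(y ^ 2 + c)) ^ 2) / (3 * c ^ 2))
      ((x ^ 2 + c) ^ 2 * √(x ^ 2 + c))⁻¹ x := by
  have hu := hasDerivAt_div_sqrt_sq_add hc x
  refine ((hu.mul ((hu.pow 2).const_sub 3)).div_const _).congr_deriv ?_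
  have hpos : 0 < x ^ 2 + c := by positivity
  have hsq := sq_sqrt hpos.le
  have := (sqrt_pos.2 hpos).ne'
  simp only [Pi.pow_apply, div_pow, hsq]
  field_simp
  linear_combination 2 * x ^ 2 * hsq

theorem tendsto_sq_add_pow_neg_five_halves_primitive (hc : 0 < c) :
    Tendsto (fun y ↦ y / √(y ^ 2 + c) * (3 - (y / √(y ^ 2 + c)) ^ 2) / (3 * c ^ 2)) atTop
      (𝓝 (2 / (3 * c ^ 2))) := by
  have hu := tendsto_div_sqrt_sq_add hc
  convert (hu.mul ((hu.pow 2).const_sub 3)).div_const (3 * c ^ 2) using 2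
  norm_num

theorem integrableOn_Ioi_sq_add_pow_neg_five_halves (hc : 0 < c) :
    IntegrableOn (fun x : ℝ ↦ ((x ^ 2 + c) ^ 2 * √(x ^ 2 + c))⁻¹) (Ioi 0) :=
  integrableOn_Ioi_deriv_of_nonneg'
    (fun x _ ↦ hasDerivAt_sq_add_pow_neg_five_halves_primitive hc x) (fun x _ ↦ by positivity)
    (tendsto_sq_add_pow_neg_five_halves_primitive hc)

theorem integral_Ioi_sq_add_pow_neg_five_halves (hc : 0 < c) :
    ∫ x in Ioi (0 : ℝ), ((x ^ 2 + c) ^ 2 * √(x ^ 2 + c))⁻¹ = 2 / (3 * c ^ 2) := by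
  rw [integral_Ioi_of_hasDerivAt_of_tendsto'
    (fun x _ ↦ hasDerivAt_sq_add_pow_neg_five_halves_primitive hc x)
    (integrableOn_Ioi_sq_add_pow_neg_five_halves hc)
    (tendsto_sq_add_pow_neg_five_halves_primitive hc)]
  norm_num

end SqAddPowNegFiveHalves

section PeriodicBernoulliIntegrals

variable {a : ℂ}

theorem add_re_le_norm_ofReal_add (ha : 0 ≤ a.re) {x : ℝ} (hx : 0 ≤ x) :
    x + a.re ≤ ‖(x : ℂ) + a‖ := by
  have := Complex.abs_re_le_norm ((x : ℂ) + a)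
  rw [add_re, ofReal_re, abs_of_nonneg (by positivity)] at this
  exact this

theorem sq_add_sq_norm_le_norm_ofReal_add_sq (ha : 0 ≤ a.re) {x : ℝ} (hx : 0 ≤ x) :
    x ^ 2 + ‖a‖ ^ 2 ≤ ‖(x : ℂ) + a‖ ^ 2 := by
  rw [Complex.sq_norm, Complex.sq_norm, normSq_apply, normSq_apply]
  simp only [add_re, add_im, ofReal_re, ofReal_im, zero_add]
  nlinarith [mul_nonneg hx ha]

theorem ofReal_add_ne_zero_s7 (ha : 0 < a.re) {x : ℝ} (hx : 0 ≤ x) : (x : ℂ) + a ≠ 0 :=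
  norm_pos_iff.1 ((by linarith : 0 < x + a.re).trans_le (add_re_le_norm_ofReal_add ha.le hx))

theorem tendsto_periodicBernoulliFun_div_pow (j : ℕ) {k : ℕ} (hk : k ≠ 0) (ha : 0 ≤ a.re) :
    Tendsto (fun x : ℝ ↦ (periodicBernoulliFun j x : ℂ) / ((x : ℂ) + a) ^ k) atTop (𝓝 0) := by
  obtain ⟨M, hM⟩ := exists_abs_periodicBernoulliFun_le j
  refine squeeze_zero_norm' ?_ ((tendsto_const_nhds (x := M)).div_atTop tendsto_id)
  filter_upwards [eventually_ge_atTop 1] with x hx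
  have hxa : x ≤ ‖(x : ℂ) + a‖ := by linarith [add_re_le_norm_ofReal_add ha (x := x) (by linarith)]
  rw [norm_div, norm_pow, norm_real, Real.norm_eq_abs]
  exact div_le_div₀ ((abs_nonneg _).trans (hM 0)) (hM x) (by positivity)
    (hxa.trans (le_self_pow₀ (by linarith) hk))

theorem integrableOn_periodicBernoulliFun_div_pow (j : ℕ) {k : ℕ} (hk : 2 ≤ k) (ha : 0 < a.re) :
    IntegrableOn (fun x : ℝ ↦ (periodicBernoulliFun j x : ℂ) / ((x : ℂ) + a) ^ k) (Ioi 0) := by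
  obtain ⟨M, hM⟩ := exists_abs_periodicBernoulliFun_le j
  have hdom : IntegrableOn (fun x : ℝ ↦ M * (x + a.re) ^ (-(k : ℝ))) (Ioi 0) :=
    (integrableOn_add_rpow_Ioi_of_lt (by norm_cast; omega) (by linarith)).const_mul M
  have hmeas : Measurable fun x : ℝ ↦ (periodicBernoulliFun j x : ℂ) / ((x : ℂ) + a) ^ k :=
    (measurable_ofReal.comp (measurable_periodicBernoulliFun j)).div (by fun_prop)
  refine hdom.mono' hmeas.aestronglyMeasurable
    ((ae_restrict_iff' measurableSet_Ioi).2 (ae_of_all _ fun x hx ↦ ?_))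
  have hxa : 0 < x + a.re := by linarith [mem_Ioi.1 hx]
  rw [norm_div, norm_pow, norm_real, Real.norm_eq_abs, rpow_neg hxa.le, rpow_natCast,
    ← div_eq_mul_inv]
  exact div_le_div₀ ((abs_nonneg _).trans (hM 0)) (hM x) (by positivity)
    (pow_le_pow_left₀ hxa.le (add_re_le_norm_ofReal_add ha.le (le_of_lt hx)) k)

theorem hasDerivAt_periodicBernoulliFun_div_pow {k : ℕ} (hk : 2 ≤ k) {x : ℝ}
    (hxa : (x : ℂ) + a ≠ 0) :
    HasDerivAt
      (fun y : ℝ ↦ ((k : ℂ) + 1)⁻¹ * ((periodicBernoulliFun (k + 1) y : ℂ) / ((y : ℂ) + a) ^ k))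
      ((periodicBernoulliFun k x : ℂ) / ((x : ℂ) + a) ^ k
        - k / (k + 1) * ((periodicBernoulliFun (k + 1) x : ℂ) / ((x : ℂ) + a) ^ (k + 1))) x := by
  have hB := (hasDerivAt_periodicBernoulliFun (by omega : 3 ≤ k + 1) x).ofReal_comp
  have hpow := (((hasDerivAt_id ((x : ℂ))).add_const a).pow k).comp_ofReal
  refine ((hB.div hpow (pow_ne_zero k hxa)).const_mul _).congr_deriv ?_
  obtain ⟨m, rfl⟩ : ∃ m, k = m + 1 := ⟨k - 1, by omega⟩
  simp only [Nat.add_sub_cancel, id, Pi.pow_apply]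
  have hm : (m : ℂ) + 1 + 1 ≠ 0 := by exact_mod_cast (m + 1).succ_ne_zero
  push_cast
  field_simp
  ring

theorem integral_periodicBernoulliFun_div_pow {k : ℕ} (hk : 2 ≤ k) (ha : 0 < a.re) :
    ∫ x in Ioi (0 : ℝ), (periodicBernoulliFun k x : ℂ) / ((x : ℂ) + a) ^ k =
      -(bernoulli (k + 1) : ℂ) / ((k + 1) * a ^ k)
        + k / (k + 1) *
          ∫ x in Ioi (0 : ℝ), (periodicBernoulliFun (k + 1) x : ℂ) / ((x : ℂ) + a) ^ (k + 1) := by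
  have hlim := (tendsto_periodicBernoulliFun_div_pow (k + 1) (by omega : k ≠ 0) ha.le).const_mul
    ((k : ℂ) + 1)⁻¹
  rw [mul_zero] at hlim
  have hFTC := integral_Ioi_of_hasDerivAt_of_tendsto'
    (fun x hx ↦ hasDerivAt_periodicBernoulliFun_div_pow hk (ofReal_add_ne_zero_s7 ha (mem_Ici.1 hx)))
    ((integrableOn_periodicBernoulliFun_div_pow k hk ha).sub
      ((integrableOn_periodicBernoulliFun_div_pow (k + 1) (by omega) ha).const_mul _)) hlim
  rw [integral_sub (integrableOn_periodicBernoulliFun_div_pow k hk ha)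
      ((integrableOn_periodicBernoulliFun_div_pow (k + 1) (by omega) ha).const_mul _),
    integral_const_mul, periodicBernoulliFun_zero] at hFTC
  push_cast at hFTC
  rw [← div_div]
  linear_combination hFTC

theorem integral_periodicBernoulliFun_three_div_pow (ha : 0 < a.re) :
    ∫ x in Ioi (0 : ℝ), (periodicBernoulliFun 3 x : ℂ) / ((x : ℂ) + a) ^ 3 =
      1 / (120 * a ^ 3) +
        3 / 5 * ∫ x in Ioi (0 : ℝ), (periodicBernoulliFun 5 x : ℂ) / ((x : ℂ) + a) ^ 5 := by
  have ha0 : a ≠ 0 := fun h ↦ by simp [h] at ha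
  rw [integral_periodicBernoulliFun_div_pow (k := 3) (by norm_num) ha,
    integral_periodicBernoulliFun_div_pow (k := 4) (by norm_num) ha, bernoulli_four_eq,
    bernoulli_five_eq]
  push_cast
  field_simp
  ring

theorem norm_integral_periodicBernoulliFun_five_div_pow_le (ha : 0 < a.re) :
    ‖∫ x in Ioi (0 : ℝ), (periodicBernoulliFun 5 x : ℂ) / ((x : ℂ) + a) ^ 5‖ ≤
      1 / (54 * ‖a‖ ^ 4) := by
  have ha0 : 0 < ‖a‖ := norm_pos_iff.2 fun h ↦ by simp [h] at ha
  have hc : 0 < ‖a‖ ^ 2 := by positivity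
  refine (norm_integral_le_of_norm_le
    ((integrableOn_Ioi_sq_add_pow_neg_five_halves hc).const_mul (1 / 36))
    ((ae_restrict_iff' measurableSet_Ioi).2 (ae_of_all _ fun x hx ↦ ?_))).trans_eq ?_
  · have h2 := sq_add_sq_norm_le_norm_ofReal_add_sq ha.le (le_of_lt hx)
    have hsqrt : √(x ^ 2 + ‖a‖ ^ 2) ≤ ‖(x : ℂ) + a‖ :=
      (sqrt_le_sqrt h2).trans_eq (sqrt_sq (norm_nonneg _))
    have h5 : (x ^ 2 + ‖a‖ ^ 2) ^ 2 * √(x ^ 2 + ‖a‖ ^ 2) ≤ ‖(x : ℂ) + a‖ ^ 5 :=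
      calc (x ^ 2 + ‖a‖ ^ 2) ^ 2 * √(x ^ 2 + ‖a‖ ^ 2)
          ≤ (‖(x : ℂ) + a‖ ^ 2) ^ 2 * ‖(x : ℂ) + a‖ := by gcongr
        _ = ‖(x : ℂ) + a‖ ^ 5 := by ring
    rw [norm_div, norm_pow, norm_real, Real.norm_eq_abs, ← div_eq_mul_inv]
    exact div_le_div₀ (by norm_num) (abs_periodicBernoulliFun_five_le x) (by positivity) h5
  · rw [integral_const_mul, integral_Ioi_sq_add_pow_neg_five_halves hc]
    field_simp
    ring

theorem norm_integral_periodicBernoulliFun_three_div_pow_le (ha : 0 < a.re) :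
    ‖∫ x in Ioi (0 : ℝ), (periodicBernoulliFun 3 x : ℂ) / ((x : ℂ) + a) ^ 3‖ ≤
      1 / (120 * ‖a‖ ^ 3) + 1 / (90 * ‖a‖ ^ 4) := by
  have h5 := norm_integral_periodicBernoulliFun_five_div_pow_le ha
  set J := ∫ x in Ioi (0 : ℝ), (periodicBernoulliFun 5 x : ℂ) / ((x : ℂ) + a) ^ 5
  rw [integral_periodicBernoulliFun_three_div_pow ha]
  calc ‖1 / (120 * a ^ 3) + 3 / 5 * J‖ ≤ ‖1 / (120 * a ^ 3)‖ + ‖(3 / 5 : ℂ)‖ * ‖J‖ :=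
        (norm_add_le _ _).trans_eq (by rw [norm_mul])
    _ ≤ 1 / (120 * ‖a‖ ^ 3) + 3 / 5 * (1 / (54 * ‖a‖ ^ 4)) := by
        rw [norm_div, norm_one, norm_mul, norm_pow, show ‖(120 : ℂ)‖ = 120 by norm_num,
          show ‖(3 / 5 : ℂ)‖ = 3 / 5 by norm_num]
        gcongr
    _ = 1 / (120 * ‖a‖ ^ 3) + 1 / (90 * ‖a‖ ^ 4) := by ring

end PeriodicBernoulliIntegrals

/-- For every real `t > 1`, with `s = 1/2 + it`,
`|(1/3)·∫₀^∞ B₃({x})/(x + s/2)³ dx| ≤ (1/60 + 3ζ(4)/(2π³))·t⁻³`,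
where `B₃(x) = x³ − (3/2)x² + (1/2)x` and `ζ(4) = π⁴/90`. -/
theorem stmt_7 (t : ℝ) (ht : 1 < t) :
    ‖(1/3) * ∫ x in Set.Ioi (0:ℝ),
        (((Int.fract x)^3 - (3/2)*(Int.fract x)^2 + (1/2)*(Int.fract x) : ℝ) : ℂ)
          / ((x:ℂ) + (1/2 + t * Complex.I)/2)^3‖
      ≤ (1/60 + 3*(π^4/90)/(2*π^3)) * t⁻¹^3 := by
  set a : ℂ := (1 / 2 + t * I) / 2
  have ha : 0 < a.re := by simp [a]
  have hnorm : ‖a‖ ^ 2 = (1 + 4 * t ^ 2) / 16 := by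
    rw [Complex.sq_norm, normSq_apply]; simp [a]; ring
  have h2 : t / 2 ≤ ‖a‖ := by nlinarith [norm_nonneg a]
  have h3 : t ^ 3 / 8 ≤ ‖a‖ ^ 3 := by
    calc t ^ 3 / 8 = (t / 2) ^ 3 := by ring
      _ ≤ ‖a‖ ^ 3 := by gcongr
  have h4 : 25 * t ^ 3 / 256 ≤ ‖a‖ ^ 4 := by
    rw [show ‖a‖ ^ 4 = (‖a‖ ^ 2) ^ 2 by ring, hnorm]
    nlinarith [sq_nonneg (t - 1), sq_nonneg (4 * t - 3)]
  have hB₃ : (fun x : ℝ ↦ (((Int.fract x)^3 - (3/2)*(Int.fract x)^2 + (1/2)*(Int.fract x) : ℝ) : ℂ)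
      / ((x:ℂ) + a)^3) = fun x ↦ (periodicBernoulliFun 3 x : ℂ) / ((x : ℂ) + a) ^ 3 := by
    simp only [periodicBernoulliFun, bernoulliFun_three]
  rw [hB₃, norm_mul, show 3 * (π ^ 4 / 90) / (2 * π ^ 3) = π / 60 by field_simp; ring]
  refine (mul_le_mul_of_nonneg_left (norm_integral_periodicBernoulliFun_three_div_pow_le ha)
    (norm_nonneg _)).trans ?_
  have ht0 : 0 < t := by linarith
  calc ‖(1 / 3 : ℂ)‖ * (1 / (120 * ‖a‖ ^ 3) + 1 / (90 * ‖a‖ ^ 4))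
      ≤ 1 / 3 * (1 / (120 * (t ^ 3 / 8)) + 1 / (90 * (25 * t ^ 3 / 256))) := by
        rw [show ‖(1 / 3 : ℂ)‖ = 1 / 3 by norm_num]
        gcongr
    _ = 203 / 3375 * t⁻¹ ^ 3 := by field_simp; ring
    _ ≤ (1 / 60 + π / 60) * t⁻¹ ^ 3 := by gcongr; linarith [pi_gt_three]
end
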